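/- Let (X,𝔖) be a hierarchically hyperbolic space. There exists M = M(𝔖), depending only on the complexity of 𝔖, such that for every g ∈ Aut(𝔖) and every U ∈ Big(g), one has g^M·U = U. Moreover, any two distinct domains U, V ∈ Big(g) are orthogonal. -/

import Mathlib

open Metric Filter Set Topology Bornology
open scoped ENNReal

noncomputable section

/-! ## Gromov products, hyperbolic spaces and Gromov boundaries -/

section Gromov

variable {M M' : Type*}

/-- The Gromov product `(x | y)_w`. -/
def gromovProd [PseudoMetricSpace M] (w x y : M) : ℝ :=
  (dist x w + dist y w - dist x y) / 2

/-- A metric space is `δ`-hyperbolic if the Gromov product satisfies the usual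
`δ`-inequality at every basepoint. -/
def IsHyperbolicSpace (M : Type*) [PseudoMetricSpace M] (δ : ℝ) : Prop :=
  ∀ w x y z : M, min (gromovProd w x y) (gromovProd w y z) - δ ≤ gromovProd w x z

/-- A geodesic metric space. -/
def IsGeodesicSpace (M : Type*) [PseudoMetricSpace M] : Prop :=
  ∀ x y : M, ∃ f : ℝ → M, f 0 = x ∧ f (dist x y) = y ∧
    ∀ s ∈ Icc (0 : ℝ) (dist x y), ∀ t ∈ Icc (0 : ℝ) (dist x y), dist (f s) (f t) = |s - t|

/-- A sequence converging at infinity: the pairwise Gromov products (at any basepoint)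
diverge. -/
def ConvergesAtInfinity [PseudoMetricSpace M] (u : ℕ → M) : Prop :=
  ∀ w : M, Tendsto (fun pq : ℕ × ℕ => gromovProd w (u pq.1) (u pq.2)) atTop atTop

/-- Two sequences converging at infinity are equivalent when their mutual Gromov
products diverge. -/
def AsympEquiv [PseudoMetricSpace M] (u v : ℕ → M) : Prop :=
  ∀ w : M, Tendsto (fun pq : ℕ × ℕ => gromovProd w (u pq.1) (v pq.2)) atTop atTop

/-- Sequences converging at infinity. -/
def GromovSeq (M : Type*) [PseudoMetricSpace M] : Type _ :=
  {u : ℕ → M // ConvergesAtInfinity u}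

/-- The Gromov boundary of a (hyperbolic) space: equivalence classes of sequences
converging at infinity. -/
def GromovBoundary (M : Type*) [PseudoMetricSpace M] : Type _ :=
  Quot fun u v : GromovSeq M => AsympEquiv u.1 v.1

/-- The boundary point represented by a sequence converging at infinity. -/
def GromovBoundary.mk [PseudoMetricSpace M] (u : ℕ → M) (hu : ConvergesAtInfinity u) :
    GromovBoundary M :=
  Quot.mk _ (⟨u, hu⟩ : GromovSeq M)

theorem Isometry.gromovProd_map [PseudoMetricSpace M] [PseudoMetricSpace M'] {φ : M → M'}
    (h : Isometry φ) (w x y : M) : gromovProd (φ w) (φ x) (φ y) = gromovProd w x y := by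
  simp [gromovProd, h.dist_eq]

theorem ConvergesAtInfinity.map [PseudoMetricSpace M] [PseudoMetricSpace M'] {φ : M → M'}
    (hiso : Isometry φ) (hsurj : Function.Surjective φ) {u : ℕ → M}
    (hu : ConvergesAtInfinity u) : ConvergesAtInfinity (φ ∘ u) := by
  intro w'
  obtain ⟨w, rfl⟩ := hsurj w'
  have e : (fun pq : ℕ × ℕ => gromovProd (φ w) ((φ ∘ u) pq.1) ((φ ∘ u) pq.2)) =
      fun pq : ℕ × ℕ => gromovProd w (u pq.1) (u pq.2) := by
    funext pq
    exact hiso.gromovProd_map w (u pq.1) (u pq.2)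
  rw [e]
  exact hu w

theorem AsympEquiv.map [PseudoMetricSpace M] [PseudoMetricSpace M'] {φ : M → M'}
    (hiso : Isometry φ) (hsurj : Function.Surjective φ) {u v : ℕ → M}
    (h : AsympEquiv u v) : AsympEquiv (φ ∘ u) (φ ∘ v) := by
  intro w'
  obtain ⟨w, rfl⟩ := hsurj w'
  have e : (fun pq : ℕ × ℕ => gromovProd (φ w) ((φ ∘ u) pq.1) ((φ ∘ v) pq.2)) =
      fun pq : ℕ × ℕ => gromovProd w (u pq.1) (v pq.2) := by
    funext pq
    exact hiso.gromovProd_map w (u pq.1) (v pq.2)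
  rw [e]
  exact h w

/-- The boundary map induced by a surjective isometry. -/
def GromovBoundary.map [PseudoMetricSpace M] [PseudoMetricSpace M'] (φ : M → M')
    (hiso : Isometry φ) (hsurj : Function.Surjective φ) :
    GromovBoundary M → GromovBoundary M' :=
  Quot.lift (fun u => GromovBoundary.mk (φ ∘ u.1) (u.2.map hiso hsurj))
    fun _ _ h => Quot.sound (h.map hiso hsurj)

/-- The sequences representing a point of the bordification `M ⊕ ∂M`. -/
def seqsOf [PseudoMetricSpace M] : M ⊕ GromovBoundary M → Set (ℕ → M)
  | Sum.inl x => {u | u = fun _ => x}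
  | Sum.inr ξ => {u | ∃ h : ConvergesAtInfinity u, GromovBoundary.mk u h = ξ}

/-- The Gromov product, based at `w`, extended to the bordification `M ⊕ ∂M`. -/
def extGromovProd [PseudoMetricSpace M] (w : M) (a b : M ⊕ GromovBoundary M) : ℝ≥0∞ :=
  ⨆ u ∈ seqsOf a, ⨆ v ∈ seqsOf b,
    Filter.liminf (fun n : ℕ => ENNReal.ofReal (gromovProd w (u n) (v n))) atTop

/-- The cone topology on the Gromov bordification `M ⊕ ∂M` of a hyperbolic space. -/
def hypBordTop (M : Type*) [PseudoMetricSpace M] :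
    TopologicalSpace (M ⊕ GromovBoundary M) :=
  TopologicalSpace.generateFrom
    ({A | ∃ o : Set M, IsOpen o ∧ A = Sum.inl '' o} ∪
      {A | ∃ (w : M) (ξ : GromovBoundary M) (r : ℝ≥0∞),
        A = {y | r < extGromovProd w y (Sum.inr ξ)}})

end Gromov

/-! ## Coarse geometry utilities -/

/-- Distance between two subsets of an (extended) metric space. -/
def eSetDist {M : Type*} [PseudoEMetricSpace M] (s t : Set M) : ℝ≥0∞ :=
  ⨅ p ∈ s, EMetric.infEdist p t

/-- Classical if-then-else for real values. -/
def cite (P : Prop) (a b : ℝ) : ℝ := @ite ℝ P (Classical.propDecidable P) a b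

/-- A quasi-isometric embedding of `ℤ` in a metric space. -/
def IsQIEmbZ {M : Type*} [PseudoMetricSpace M] (f : ℤ → M) : Prop :=
  ∃ lam c : ℝ, 1 ≤ lam ∧ 0 ≤ c ∧ ∀ m n : ℤ,
    (|(m : ℝ) - (n : ℝ)| - c) / lam ≤ dist (f m) (f n) ∧
      dist (f m) (f n) ≤ lam * |(m : ℝ) - (n : ℝ)| + c

/-- A coarsely set-valued quasi-isometric embedding of `ℤ` in a metric space. -/
def IsSetQIEmbZ {M : Type*} [PseudoMetricSpace M] (f : ℤ → Set M) : Prop :=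
  ∃ lam c : ℝ, 1 ≤ lam ∧ 0 ≤ c ∧ ∀ m n : ℤ, ∀ p ∈ f m, ∀ q ∈ f n,
    (|(m : ℝ) - (n : ℝ)| - c) / lam ≤ dist p q ∧
      dist p q ≤ lam * |(m : ℝ) - (n : ℝ)| + c

/-- A `ℤ`-indexed quasi-geodesic is Morse if every quasi-geodesic segment with endpoints
on it stays in a neighborhood of it whose radius depends only on the quasi-geodesic
constants. -/
def IsMorseZ {M : Type*} [PseudoMetricSpace M] (γ : ℤ → M) : Prop :=
  ∀ lam c : ℝ, 1 ≤ lam → 0 ≤ c → ∃ R : ℝ,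
    ∀ (f : ℝ → M) (a b : ℝ), a ≤ b →
      (∀ s ∈ Icc a b, ∀ t ∈ Icc a b,
        (|s - t| - c) / lam ≤ dist (f s) (f t) ∧ dist (f s) (f t) ≤ lam * |s - t| + c) →
      (∃ m : ℤ, f a = γ m) → (∃ n : ℤ, f b = γ n) →
      ∀ t ∈ Icc a b, Metric.infDist (f t) (Set.range γ) ≤ R

/-! ## Asymptotic cones and wideness -/

section Cones

variable {Y : Type*} [PseudoMetricSpace Y]

/-- Ultralimit of a sequence in `ℝ≥0∞`. -/
def ulimENN (φ : Ultrafilter ℕ) (f : ℕ → ℝ≥0∞) : ℝ≥0∞ :=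
  limUnder (φ : Filter ℕ) f

/-- Rescaled ultralimit distance between two sequences. -/
def coneEDist (φ : Ultrafilter ℕ) (d : ℕ → ℝ) (y z : ℕ → Y) : ℝ≥0∞ :=
  ulimENN φ fun n => ENNReal.ofReal (dist (y n) (z n) / d n)

/-- Points of the asymptotic cone: sequences at bounded rescaled distance from the
basepoint sequence. -/
def ConePt (Y : Type*) [PseudoMetricSpace Y] (φ : Ultrafilter ℕ) (d : ℕ → ℝ) (b : ℕ → Y) :=
  {y : ℕ → Y // coneEDist φ d y b ≠ ⊤}

/-- The asymptotic cone of `Y` with respect to an ultrafilter, scaling sequence and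
basepoint sequence. -/
def AsympCone (Y : Type*) [PseudoMetricSpace Y] (φ : Ultrafilter ℕ) (d : ℕ → ℝ)
    (b : ℕ → Y) :=
  Quot fun y z : ConePt Y φ d b => coneEDist φ d y.1 z.1 = 0

/-- The (quotient of the) metric topology on the asymptotic cone. -/
def coneTop (Y : Type*) [PseudoMetricSpace Y] (φ : Ultrafilter ℕ) (d : ℕ → ℝ)
    (b : ℕ → Y) : TopologicalSpace (AsympCone Y φ d b) :=
  TopologicalSpace.coinduced (Quot.mk _)
    (TopologicalSpace.generateFrom
      {s : Set (ConePt Y φ d b) | ∃ (y : ConePt Y φ d b) (ε : ℝ≥0∞), 0 < ε ∧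
        s = {z | coneEDist φ d y.1 z.1 < ε}})

/-- A metric space is wide if no asymptotic cone of it has a cut-point. -/
def IsWide (Y : Type*) [PseudoMetricSpace Y] : Prop :=
  ∀ (φ : Ultrafilter ℕ) (d : ℕ → ℝ) (b : ℕ → Y),
    Tendsto d atTop atTop → (φ : Filter ℕ) ≤ Filter.cofinite →
    ∀ p : AsympCone Y φ d b,
      @IsPreconnected (AsympCone Y φ d b) (coneTop Y φ d b) {p}ᶜ

end Cones

/-! ## Hierarchically hyperbolic spaces -/

/-- A hierarchically hyperbolic space structure on the quasigeodesic metric space `X`,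
with index set `S` of domains and associated uniformly hyperbolic spaces `C U`,
following Behrstock--Hagen--Sisto.  All structures are assumed normalized. -/
structure HHS (X : Type*) [MetricSpace X] {S : Type*} (C : S → Type*)
    [∀ U, MetricSpace (C U)] where
  /-- X is a quasigeodesic space -/
  qc : ℝ
  qc_ge : 1 ≤ qc
  quasigeodesics : ∀ x y : X, ∃ f : ℝ → X, f 0 = x ∧ f (dist x y) = y ∧
    ∀ s ∈ Icc (0 : ℝ) (dist x y), ∀ t ∈ Icc (0 : ℝ) (dist x y),
      (|s - t| - qc) / qc ≤ dist (f s) (f t) ∧ dist (f s) (f t) ≤ qc * |s - t| + qc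
  /-- nesting -/
  nest : S → S → Prop
  /-- orthogonality -/
  orth : S → S → Prop
  nest_refl : ∀ U, nest U U
  nest_antisymm : ∀ {U V}, nest U V → nest V U → U = V
  nest_trans : ∀ {U V W}, nest U V → nest V W → nest U W
  /-- the unique ⊑-maximal domain -/
  maxD : S
  nest_maxD : ∀ U, nest U maxD
  orth_symm : ∀ {U V}, orth U V → orth V U
  orth_irrefl : ∀ U, ¬ orth U U
  orth_of_nest : ∀ {U V W}, nest V W → orth W U → orth V U
  not_nest_of_orth : ∀ {U V}, orth U V → ¬ nest U V
  /-- containers for orthogonal complements -/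
  container : ∀ T U, nest U T → (∃ V, nest V T ∧ orth V U) →
    ∃ W, nest W T ∧ W ≠ T ∧ ∀ V, nest V T → orth V U → nest V W
  /-- uniform hyperbolicity constant -/
  δ : ℝ
  hyp : ∀ U, IsHyperbolicSpace (C U) δ
  geod : ∀ U, IsGeodesicSpace (C U)
  /-- constants -/
  ξc : ℝ≥0∞
  ξc_ne_top : ξc ≠ ⊤
  κ₀ : ℝ≥0∞
  κ₀_ne_top : κ₀ ≠ ⊤
  Ec : ℝ≥0∞
  Ec_ne_top : Ec ≠ ⊤
  Kc : ℝ≥0∞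
  Kc_ne_top : Kc ≠ ⊤
  αc : ℝ≥0∞
  αc_ne_top : αc ≠ ⊤
  lamc : ℝ
  lamc_ge : 1 ≤ lamc
  /-- complexity -/
  complexity : ℕ
  /-- projections -/
  π : (U : S) → X → Set (C U)
  π_nonempty : ∀ U x, (π U x).Nonempty
  π_bounded : ∀ U x, EMetric.diam (π U x) ≤ ξc
  π_lipschitz : ∀ U x y, ∀ p ∈ π U x, ∀ q ∈ π U y, edist p q ≤ Kc * edist x y + Kc
  /-- normalization: coarse surjectivity of the projections -/
  normalized : ∀ (U : S) (z : C U), EMetric.infEdist z (⋃ x : X, π U x) ≤ ξc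
  /-- relative projections (the coarse point `ρ^U_V ⊆ C V`) -/
  ρSet : (U V : S) → Set (C V)
  ρSet_nonempty : ∀ U V,
    ((nest U V ∧ U ≠ V) ∨ (¬ orth U V ∧ ¬ nest U V ∧ ¬ nest V U)) → (ρSet U V).Nonempty
  ρSet_bounded : ∀ U V, EMetric.diam (ρSet U V) ≤ ξc
  /-- downward relative projections `ρ^U_V : C U → 2^{C V}` for `V ⊑ U` -/
  ρMap : (U V : S) → C U → Set (C V)
  /-- consistency: transverse case -/
  consistency_transv : ∀ U V, (¬ orth U V ∧ ¬ nest U V ∧ ¬ nest V U) → ∀ x : X,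
    eSetDist (π V x) (ρSet U V) ≤ κ₀ ∨ eSetDist (π U x) (ρSet V U) ≤ κ₀
  /-- consistency: nested case -/
  consistency_nest : ∀ V W, nest V W → V ≠ W → ∀ x : X,
    eSetDist (π W x) (ρSet V W) ≤ κ₀ ∨
      EMetric.diam (π V x ∪ ⋃ p ∈ π W x, ρMap W V p) ≤ κ₀
  /-- consistency of relative projections -/
  consistency_rho : ∀ U V W, nest U V →
    ((nest V W ∧ V ≠ W) ∨ ((¬ orth V W ∧ ¬ nest V W ∧ ¬ nest W V) ∧ ¬ orth U W)) →
    eSetDist (ρSet U W) (ρSet V W) ≤ κ₀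
  /-- finite complexity -/
  finite_complexity : ∀ c : Finset S,
    (∀ U ∈ c, ∀ V ∈ c, nest U V ∨ nest V U) → c.card ≤ complexity
  /-- large links -/
  large_links : ∀ (W : S) (x x' : X), ∀ p ∈ π W x, ∀ q ∈ π W x',
    ∃ T : Finset S, T.card ≤ ⌊lamc * dist p q + lamc⌋₊ ∧
      (∀ t ∈ T, nest t W ∧ t ≠ W) ∧
      (∀ V, nest V W → V ≠ W → (∃ t ∈ T, nest V t) ∨
        ∀ p' ∈ π V x, ∀ q' ∈ π V x', edist p' q' ≤ Ec) ∧
      ∀ t ∈ T, eSetDist (π W x) (ρSet t W) ≤ ENNReal.ofReal (lamc * dist p q + lamc)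
  /-- bounded geodesic image -/
  bgi : ∀ W V, nest V W → V ≠ W → ∀ (f : ℝ → C W) (a b : ℝ),
    (∀ s ∈ Icc a b, ∀ t ∈ Icc a b, dist (f s) (f t) = |s - t|) →
    EMetric.diam (⋃ t ∈ Icc a b, ρMap W V (f t)) ≤ Ec ∨
      ∃ t ∈ Icc a b, EMetric.infEdist (f t) (ρSet V W) ≤ Ec
  /-- partial realization -/
  partial_realization : ∀ Vs : Finset S,
    (∀ U ∈ Vs, ∀ V ∈ Vs, U ≠ V → orth U V) →
    ∀ p : (V : Vs) → C V.1, (∀ V : Vs, ∃ x, p V ∈ π V.1 x) →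
    ∃ x : X, (∀ V : Vs, EMetric.infEdist (p V) (π V.1 x) ≤ αc) ∧
      (∀ V : Vs, ∀ W, nest V.1 W → V.1 ≠ W → eSetDist (π W x) (ρSet V.1 W) ≤ αc) ∧
      ∀ V : Vs, ∀ W, (¬ orth W V.1 ∧ ¬ nest W V.1 ∧ ¬ nest V.1 W) →
        eSetDist (π W x) (ρSet V.1 W) ≤ αc
  /-- uniqueness -/
  uniqueness : ∀ κ : ℝ≥0∞, κ ≠ ⊤ → ∃ θ : ℝ≥0∞, θ ≠ ⊤ ∧
    ∀ x y : X, θ ≤ edist x y → ∃ V, κ ≤ eSetDist (π V x) (π V y)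

variable {X : Type*} [MetricSpace X] {S : Type*} {C : S → Type*} [∀ U, MetricSpace (C U)]

/-- Transversality. -/
def HHS.Transv (H : HHS X C) (U V : S) : Prop :=
  ¬ H.orth U V ∧ ¬ H.nest U V ∧ ¬ H.nest V U

/-! ## The HHS boundary -/

/-- A point of the HHS boundary: a formal convex combination of boundary points of the
hyperbolic spaces attached to a pairwise orthogonal support set. -/
structure HHSBoundaryPt (H : HHS X C) where
  supp : Finset S
  supp_nonempty : supp.Nonempty
  supp_orth : ∀ U ∈ supp, ∀ V ∈ supp, U ≠ V → H.orth U V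
  pt : (U : S) → U ∈ supp → GromovBoundary (C U)
  a : S → ℝ
  a_pos : ∀ U ∈ supp, 0 < a U
  a_eq_zero : ∀ U, U ∉ supp → a U = 0
  a_sum : ∑ U ∈ supp, a U = 1

/-- The bordification of an HHS. -/
abbrev Bord (H : HHS X C) := X ⊕ HHSBoundaryPt H

/-- A sequence in `C T` representing the `T`-coordinate of a boundary point. -/
def HHS.Represents (H : HHS X C) (q : HHSBoundaryPt H) (T : S) (u : ℕ → C T) : Prop :=
  ∃ (hT : T ∈ q.supp) (hu : ConvergesAtInfinity u), GromovBoundary.mk u hu = q.pt T hT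

/-- `q` is remote with respect to (the support of) `p`. -/
def IsRemote (H : HHS X C) (p q : HHSBoundaryPt H) : Prop :=
  (∀ U ∈ q.supp, U ∉ p.supp) ∧ ∀ U ∈ p.supp, ∃ T ∈ q.supp, ¬ H.orth T U

/-- The extended support `S̄_q` used in the definition of the remote part. -/
def suppExt (H : HHS X C) (p q : HHSBoundaryPt H) : Set S :=
  {V | V ∈ p.supp ∨ ((∀ U ∈ p.supp, H.orth V U) ∧ ∃ W ∈ q.supp, ¬ H.orth V W)}

open Classical in
/-- The boundary projection `∂π_{Supp p}(q)` (as a coarse point, i.e. a set). -/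
def bdryProjSet (H : HHS X C) (q : HHSBoundaryPt H) (V : S) : Set (C V) :=
  ⋃ T ∈ q.supp, ⋃ (_ : ¬ H.orth T V ∧ T ≠ V),
    if H.nest V T then
      {z | ∃ u : ℕ → C T, H.Represents q T u ∧
        ∀ᶠ n in atTop, EMetric.infEdist z (H.ρMap T V (u n)) ≤ H.Ec}
    else H.ρSet T V

/-- The distance `d_V(x₀, ∂π_{Supp p}(q))`. -/
def bProjDist (H : HHS X C) (x₀ : X) (q : HHSBoundaryPt H) (V : S) : ℝ :=
  (eSetDist (H.π V x₀) (bdryProjSet H q V)).toReal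

/-- The distance `d_V(x₀, x)` measured in `C V`. -/
def intDist (H : HHS X C) (x₀ x : X) (V : S) : ℝ :=
  (eSetDist (H.π V x₀) (H.π V x)).toReal

/-- The remote part of a basic neighborhood. -/
def remotePart (H : HHS X C) (x₀ : X) (p : HHSBoundaryPt H)
    (N : (V : S) → Set (C V ⊕ GromovBoundary (C V))) (ε : ℝ) :
    Set (HHSBoundaryPt H) :=
  {q | IsRemote H p q ∧
    (∀ V ∈ p.supp, ∃ z ∈ bdryProjSet H q V, Sum.inl z ∈ N V) ∧
    (∀ V ∈ suppExt H p q, ∀ V' ∈ p.supp,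
      |bProjDist H x₀ q V / bProjDist H x₀ q V' - p.a V / p.a V'| < ε) ∧
    (∑ T ∈ q.supp, cite (∀ U ∈ p.supp, H.orth T U) (q.a T) 0) < ε}

/-- The non-remote part of a basic neighborhood. -/
def nonRemotePart (H : HHS X C) (p : HHSBoundaryPt H)
    (N : (V : S) → Set (C V ⊕ GromovBoundary (C V))) (ε : ℝ) :
    Set (HHSBoundaryPt H) :=
  {q | ¬ IsRemote H p q ∧
    (∑ V ∈ q.supp, cite (V ∈ p.supp) 0 (q.a V)) < ε ∧
    ∀ T (hT : T ∈ q.supp), T ∈ p.supp →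
      |q.a T - p.a T| < ε ∧ Sum.inr (q.pt T hT) ∈ N T}

/-- The interior part of a basic neighborhood. -/
def interiorPart (H : HHS X C) (x₀ : X) (p : HHSBoundaryPt H)
    (N : (V : S) → Set (C V ⊕ GromovBoundary (C V))) (ε : ℝ) : Set X :=
  {x | (∀ V ∈ p.supp, ∃ z ∈ H.π V x, Sum.inl z ∈ N V) ∧
    (∀ V ∈ p.supp, ∀ V' ∈ p.supp,
      |p.a V / p.a V' - intDist H x₀ x V / intDist H x₀ x V'| < ε) ∧
    ∀ V ∈ p.supp, ∀ T, (∀ U ∈ p.supp, H.orth T U) →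
      intDist H x₀ x T / intDist H x₀ x V < ε}

/-- A basic neighborhood `N_{{U_S},ε}(p)` in the bordification. -/
def basicNbhd (H : HHS X C) (x₀ : X) (p : HHSBoundaryPt H)
    (N : (V : S) → Set (C V ⊕ GromovBoundary (C V))) (ε : ℝ) : Set (Bord H) :=
  Sum.inl '' interiorPart H x₀ p N ε ∪
    Sum.inr '' (remotePart H x₀ p N ε ∪ nonRemotePart H p N ε)

/-- `B` is one of the basic neighborhoods of the boundary point `p`. -/
def IsBasicNbhd (H : HHS X C) (x₀ : X) (p : HHSBoundaryPt H) (B : Set (Bord H)) : Prop :=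
  ∃ (N : (V : S) → Set (C V ⊕ GromovBoundary (C V))) (ε : ℝ), 0 < ε ∧
    (∀ V (hV : V ∈ p.supp),
      @IsOpen _ (hypBordTop (C V)) (N V) ∧ Sum.inr (p.pt V hV) ∈ N V) ∧
    B = basicNbhd H x₀ p N ε

/-- The topology on the bordification `X̄ = X ∪ ∂X`: generated by declaring the basic
sets to be a neighborhood basis at boundary points, together with the open subsets
of `X`. -/
def bordTop (H : HHS X C) (x₀ : X) : TopologicalSpace (Bord H) :=
  TopologicalSpace.generateFrom
    {A | (∀ x : X, Sum.inl x ∈ A → ∃ o : Set X, IsOpen o ∧ x ∈ o ∧ Sum.inl '' o ⊆ A) ∧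
      ∀ p : HHSBoundaryPt H, Sum.inr p ∈ A →
        ∃ B, IsBasicNbhd H x₀ p B ∧ B ⊆ A}

/-! ## Automorphisms and actions -/

/-- An action of a group `G` on the hierarchically hyperbolic space `(X, 𝔖)` by
HHS automorphisms: `G` permutes the domains preserving nesting and orthogonality,
acts by isometries on the attached hyperbolic spaces, and acts on `X` compatibly
with all projections.  This encodes a homomorphism `G → Aut(𝔖)`. -/
structure HHSAction (G : Type*) [Group G] {X : Type*} [MetricSpace X] {S : Type*}
    {C : S → Type*} [∀ U, MetricSpace (C U)] (H : HHS X C) where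
  ρX : G → X → X
  ρX_one : ∀ x, ρX 1 x = x
  ρX_mul : ∀ g h x, ρX (g * h) x = ρX g (ρX h x)
  σ : G → S → S
  σ_one : ∀ U, σ 1 U = U
  σ_mul : ∀ g h U, σ (g * h) U = σ g (σ h U)
  iso : (g : G) → (U : S) → C U → C (σ g U)
  iso_isometry : ∀ g U, Isometry (iso g U)
  iso_surjective : ∀ g U, Function.Surjective (iso g U)
  iso_one : ∀ (U : S) (z : C U), HEq (iso 1 U z) z
  iso_mul : ∀ (g h : G) (U : S) (z : C U), HEq (iso (g * h) U z) (iso g (σ h U) (iso h U z))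
  nest_iff : ∀ g U V, H.nest (σ g U) (σ g V) ↔ H.nest U V
  orth_iff : ∀ g U V, H.orth (σ g U) (σ g V) ↔ H.orth U V
  Ka : ℝ≥0∞
  Ka_ne_top : Ka ≠ ⊤
  proj_compat : ∀ (g : G) (U : S) (x : X), ∀ p ∈ H.π U x,
    EMetric.infEdist (iso g U p) (H.π (σ g U) (ρX g x)) ≤ Ka
  rho_compat : ∀ (g : G) (U V : S), ((H.nest U V ∧ U ≠ V) ∨ H.Transv U V) →
    ∀ z ∈ H.ρSet U V, EMetric.infEdist (iso g V z) (H.ρSet (σ g U) (σ g V)) ≤ Ka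

namespace HHSAction

variable {G : Type*} [Group G] {H : HHS X C}

theorem σ_inv_σ (A : HHSAction G H) (g : G) (U : S) : A.σ g⁻¹ (A.σ g U) = U := by
  rw [← A.σ_mul, inv_mul_cancel, A.σ_one]

theorem σ_σ_inv (A : HHSAction G H) (g : G) (U : S) : A.σ g (A.σ g⁻¹ U) = U := by
  rw [← A.σ_mul, mul_inv_cancel, A.σ_one]

theorem σ_injective (A : HHSAction G H) (g : G) : Function.Injective (A.σ g) := by
  intro U V h
  have h' := congrArg (A.σ g⁻¹) h
  rwa [A.σ_inv_σ, A.σ_inv_σ] at h'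

/-- The `⟨g⟩`-orbit of `x` in `X`. -/
def orbit (A : HHSAction G H) (g : G) (x : X) : Set X :=
  Set.range fun n : ℤ => A.ρX (g ^ n) x

/-- The projection of the `⟨g⟩`-orbit of `x` to `C U`. -/
def projOrbit (A : HHSAction G H) (g : G) (U : S) (x : X) : Set (C U) :=
  ⋃ n : ℤ, H.π U (A.ρX (g ^ n) x)

/-- `Big(g)`: the set of domains to which the `⟨g⟩`-orbit projects unboundedly. -/
def bigSet (A : HHSAction G H) (g : G) (x : X) : Set S :=
  {U | ¬ Bornology.IsBounded (A.projOrbit g U x)}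

/-- The set of domains on which `G` has unbounded projection. -/
def activeSet (A : HHSAction G H) (x : X) : Set S :=
  {U | ¬ Bornology.IsBounded (⋃ g : G, H.π U (A.ρX g x))}

/-- `𝔄(G)`: the ⊑-maximal active domains. -/
def maxActiveSet (A : HHSAction G H) (x : X) : Set S :=
  {U | U ∈ A.activeSet x ∧ ∀ V ∈ A.activeSet x, H.nest U V → U = V}

open Classical in
/-- The induced boundary map on the HHS boundary: `p = Σ a_U p_U` is sent to
`Σ a_U ĝ(p_U)`. -/
def bdryPtMap (A : HHSAction G H) (g : G) (p : HHSBoundaryPt H) : HHSBoundaryPt H where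
  supp := p.supp.image (A.σ g)
  supp_nonempty := p.supp_nonempty.image _
  supp_orth := by
    intro V₁ h₁ V₂ h₂ hne
    obtain ⟨U₁, hU₁, rfl⟩ := Finset.mem_image.mp h₁
    obtain ⟨U₂, hU₂, rfl⟩ := Finset.mem_image.mp h₂
    refine (A.orth_iff g U₁ U₂).mpr (p.supp_orth U₁ hU₁ U₂ hU₂ ?_)
    intro h; exact hne (by rw [h])
  pt := fun V hV => by
    have h := Finset.mem_image.mp hV
    exact cast (congrArg (fun W : S => GromovBoundary (C W)) (Classical.choose_spec h).2)
      (GromovBoundary.map (A.iso g (Classical.choose h)) (A.iso_isometry g _)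
        (A.iso_surjective g _) (p.pt (Classical.choose h) (Classical.choose_spec h).1))
  a := fun V => p.a (A.σ g⁻¹ V)
  a_pos := by
    intro V hV
    obtain ⟨U, hU, rfl⟩ := Finset.mem_image.mp hV
    simp only [A.σ_inv_σ]
    exact p.a_pos U hU
  a_eq_zero := fun V hV => p.a_eq_zero _ fun hmem =>
    hV (Finset.mem_image.mpr ⟨A.σ g⁻¹ V, hmem, A.σ_σ_inv g V⟩)
  a_sum := by
    rw [Finset.sum_image (fun x _ y _ h => A.σ_injective g h)]
    simp only [A.σ_inv_σ]
    exact p.a_sum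

/-- The induced map on the bordification. -/
def bordMap (A : HHSAction G H) (g : G) : Bord H → Bord H :=
  Sum.map (A.ρX g) (A.bdryPtMap g)

/-- The isometry of `C U` induced by an element `g` with `σ g U = U`. -/
def inducedIso (A : HHSAction G H) (g : G) (U : S) (h : A.σ g U = U) : C U → C U :=
  fun z => cast (congrArg C h) (A.iso g U z)

/-- The set of induced isometries of `C U` coming from the stabilizer of `U` and
moving both `s` and `s'` at most `ε`. -/
def inducedMaps (A : HHSAction G H) (U : S) (ε : ℝ) (s s' : C U) : Set (C U → C U) :=
  {φ | (∃ (g : G) (h : A.σ g U = U), φ = A.inducedIso g U h) ∧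
    dist (φ s) s ≤ ε ∧ dist (φ s') s' ≤ ε}

/-- The image of the stabilizer of `U` under the restriction homomorphism
`θ_U` acts acylindrically on `C U`. -/
def ActsAcylindricallyOn (A : HHSAction G H) (U : S) : Prop :=
  ∀ ε : ℝ, 0 < ε → ∃ (R : ℝ) (N : ℕ), ∀ s s' : C U, R ≤ dist s s' →
    (A.inducedMaps U ε s s').Finite ∧ (A.inducedMaps U ε s s').ncard ≤ N

/-- A group of automorphisms is hierarchically acylindrical if each restriction to a
domain stabilizer acts acylindrically on the corresponding hyperbolic space. -/
def HierarchicallyAcylindrical (A : HHSAction G H) : Prop :=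
  ∀ U : S, A.ActsAcylindricallyOn U

end HHSAction

/-! ## Hierarchically hyperbolic groups -/

/-- Word metric distance with respect to a finite generating set. -/
def wordDist {G : Type*} [Group G] (T : Finset G) (g h : G) : ℝ :=
  sInf {r : ℝ | ∃ l : List G, (∀ a ∈ l, a ∈ T ∨ a⁻¹ ∈ T) ∧ l.prod = g⁻¹ * h ∧
    r = (l.length : ℝ)}

/-- A hierarchically hyperbolic group structure: a finitely generated group `G`,
equipped with a word metric, with an HHS structure on which `G` acts by automorphisms
via left multiplication, with finitely many orbits of domains. -/
structure HHG (G : Type*) [Group G] [MetricSpace G] {S : Type*} (C : S → Type*)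
    [∀ U, MetricSpace (C U)] where
  genset : Finset G
  gen_generates : Subgroup.closure (genset : Set G) = ⊤
  dist_eq_word : ∀ g h : G, dist g h = wordDist genset g h
  hhs : HHS G C
  act : HHSAction G hhs
  act_eq_mul : ∀ g x, act.ρX g x = g * x
  domain_cofinite : ∃ T : Finset S, ∀ U : S, ∃ g : G, act.σ g U ∈ T

/-! ## Hierarchical quasiconvexity, limit sets, product regions -/

/-- A `κ`-consistent tuple. -/
def ConsistentTuple (H : HHS X C) (κ : ℝ≥0∞) (b : (U : S) → C U) : Prop :=
  (∀ U V, H.Transv U V →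
    EMetric.infEdist (b V) (H.ρSet U V) ≤ κ ∨ EMetric.infEdist (b U) (H.ρSet V U) ≤ κ) ∧
  ∀ U V, H.nest U V → U ≠ V →
    EMetric.infEdist (b V) (H.ρSet U V) ≤ κ ∨
      EMetric.diam ({b U} ∪ H.ρMap V U (b V)) ≤ κ

/-- Hierarchical quasiconvexity of a subspace `Y ⊆ X`. -/
def HierQuasiconvex (H : HHS X C) (Y : Set X) : Prop :=
  ∃ k₀ : ℝ≥0∞, k₀ ≠ ⊤ ∧
    (∀ U : S, ∀ z z' : C U, z ∈ (⋃ y ∈ Y, H.π U y) → z' ∈ (⋃ y ∈ Y, H.π U y) →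
      ∀ f : ℝ → C U, f 0 = z → f (dist z z') = z' →
      (∀ s ∈ Icc (0 : ℝ) (dist z z'), ∀ t ∈ Icc (0 : ℝ) (dist z z'),
        dist (f s) (f t) = |s - t|) →
      ∀ t ∈ Icc (0 : ℝ) (dist z z'),
        EMetric.infEdist (f t) (⋃ y ∈ Y, H.π U y) ≤ k₀) ∧
    ∀ κ : ℝ≥0∞, κ ≠ ⊤ → ∃ D : ℝ≥0∞, D ≠ ⊤ ∧
      ∀ b : (U : S) → C U, ConsistentTuple H κ b →
        (∀ U, b U ∈ ⋃ y ∈ Y, H.π U y) →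
        ∀ x : X, (∀ U, EMetric.infEdist (b U) (H.π U x) ≤ κ) →
          EMetric.infEdist x Y ≤ D

/-- The limit set `ΛY ⊆ ∂X` of a subspace `Y ⊆ X`. -/
def limitSet (H : HHS X C) (Y : Set X) : Set (HHSBoundaryPt H) :=
  {p | ∀ U (hU : U ∈ p.supp), ∃ u : ℕ → C U,
    (∀ n, u n ∈ ⋃ y ∈ Y, H.π U y) ∧
    ∃ hu : ConvergesAtInfinity u, GromovBoundary.mk u hu = p.pt U hU}

/-- The standard product region `P_U` (at tolerance `κ`). -/
def productRegion (H : HHS X C) (U : S) (κ : ℝ≥0∞) : Set X :=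
  {x | ∀ V : S, (H.Transv U V ∨ (H.nest U V ∧ U ≠ V)) →
    eSetDist (H.π V x) (H.ρSet U V) ≤ κ}

/-- A product HHS with unbounded factors. -/
def IsProductHHSUnboundedFactors (H : HHS X C) : Prop :=
  ∃ K : ℝ≥0∞, K ≠ ⊤ ∧ ∃ U : S,
    (∀ V : S, H.nest V U ∨ H.orth V U ∨ EMetric.diam (Set.univ : Set (C V)) ≤ K) ∧
    ∀ n : ℕ, (∃ V, H.nest V U ∧ (n : ℝ≥0∞) ≤ EMetric.diam (⋃ x : X, H.π V x)) ∧
      ∃ W, H.orth W U ∧ (n : ℝ≥0∞) ≤ EMetric.diam (⋃ x : X, H.π W x)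

/-- A rank-one automorphism: axial, with a single big domain, everything orthogonal
to which has uniformly bounded projection. -/
def RankOne {G : Type*} [Group G] {H : HHS X C} (A : HHSAction G H) (g : G) (x₀ : X) :
    Prop :=
  IsQIEmbZ (fun n : ℤ => A.ρX (g ^ n) x₀) ∧
    ∃ W : S, A.bigSet g x₀ = {W} ∧
      ∀ U : S, H.orth U W → Bornology.IsBounded (⋃ x : X, H.π U x)

/-! ## Slanted hieromorphisms -/

/-- A slanted hieromorphism between hierarchically hyperbolic spaces. -/
structure SlantedHiero {X X' : Type*} [MetricSpace X] [MetricSpace X']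
    {S S' : Type*} {C : S → Type*} {C' : S' → Type*}
    [∀ U, MetricSpace (C U)] [∀ V, MetricSpace (C' V)]
    (H : HHS X C) (H' : HHS X' C') where
  toFun : X → X'
  πf : S → Finset S'
  πf_orth : ∀ U, ∀ V ∈ πf U, ∀ W ∈ πf U, V ≠ W → H'.orth V W
  ρf : (U : S) → C U → (V : S') → V ∈ πf U → C' V
  /-- (I) -/
  nest_down : ∀ U V, H.nest U V → U ≠ V → ∀ W' ∈ πf V,
    ∃ W ∈ πf U, H'.nest W W' ∧ W ≠ W'
  nest_up : ∀ U V, H.nest U V → U ≠ V → ∀ W ∈ πf U,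
    ∃! W' : S', W' ∈ πf V ∧ H'.nest W W' ∧ W ≠ W'
  /-- (II) -/
  orth_pres : ∀ U V, H.orth U V → ∀ W ∈ πf U, ∀ W' ∈ πf V, W ≠ W' → H'.orth W W'
  /-- (III) -/
  transv_pres : ∀ U V, H.Transv U V →
    (∀ W ∈ πf U, ∃ W' ∈ πf V, H'.Transv W W') ∧
    (∀ W' ∈ πf V, ∃ W ∈ πf U, H'.Transv W W')
  /-- (IV): uniform quasi-isometric embeddings into the product -/
  lam : ℝ
  lam_ge : 1 ≤ lam
  qie : ∀ (U : S) (x y : C U),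
    ((dist x y - lam) / lam ≤
      ∑ V ∈ (πf U).attach, dist (ρf U x V.1 V.2) (ρf U y V.1 V.2)) ∧
    ((∑ V ∈ (πf U).attach, dist (ρf U x V.1 V.2) (ρf U y V.1 V.2)) ≤
      lam * dist x y + lam)
  /-- (V): coarse commutation with the projections -/
  Kf : ℝ≥0∞
  Kf_ne_top : Kf ≠ ⊤
  proj_commute : ∀ (U : S) (x : X) (V : S') (hV : V ∈ πf U), ∀ p ∈ H.π U x,
    EMetric.infEdist (ρf U p V hV) (H'.π V (toFun x)) ≤ Kf
  /-- (VI): coarse commutation with the relative projections -/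
  rho_commute_nest : ∀ U V, H.nest U V → U ≠ V →
    ∀ (W' : S') (hW' : W' ∈ πf V) (W : S'), W ∈ πf U → H'.nest W W' →
    ∀ z ∈ H.ρSet U V, EMetric.infEdist (ρf V z W' hW') (H'.ρSet W W') ≤ Kf
  rho_commute_transv : ∀ U V, H.Transv U V →
    ∀ (W' : S') (hW' : W' ∈ πf V) (W : S'), W ∈ πf U → H'.Transv W W' →
    ∀ z ∈ H.ρSet U V, EMetric.infEdist (ρf V z W' hW') (H'.ρSet W W') ≤ Kf
  /-- (VII): coarse commutation with downward relative projections -/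
  rho_commute_down : ∀ U V, H.nest V U → V ≠ U →
    ∀ (W : S') (hW : W ∈ πf V) (W'' : S') (hW'' : W'' ∈ πf U), H'.nest W W'' →
    ∀ (x : C U), ∀ z ∈ H.ρMap U V x,
      EMetric.infEdist (ρf V z W hW) (H'.ρMap W'' W (ρf U x W'' hW'')) ≤ Kf

/-- An extensible slanted hieromorphism. -/
def SlantedHiero.Extensible {X X' : Type*} [MetricSpace X] [MetricSpace X']
    {S S' : Type*} {C : S → Type*} {C' : S' → Type*}
    [∀ U, MetricSpace (C U)] [∀ V, MetricSpace (C' V)]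
    {H : HHS X C} {H' : HHS X' C'} (f : SlantedHiero H H') : Prop :=
  Function.Injective f.πf ∧
  (∀ V' : S', (∃ U, V' ∈ f.πf U) ∨
    EMetric.diam (⋃ x : X, H'.π V' (f.toFun x)) ≤ f.Kf) ∧
  ∃ lam₁ lam₂ : ℝ, 0 < lam₁ ∧ lam₁ ≤ lam₂ ∧
    ∀ (U : S) (W : S') (hW : W ∈ f.πf U), ∃ lam ∈ Icc lam₁ lam₂, ∃ lam' : ℝ, 0 ≤ lam' ∧
      ∀ x y : C U,
        lam * dist x y - lam' ≤ dist (f.ρf U x W hW) (f.ρf U y W hW) ∧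
        dist (f.ρf U x W hW) (f.ρf U y W hW) ≤ lam * dist x y + lam'
/-! ## Auxiliary lemmas for the main theorem -/

private theorem addNeTop {a b : ℝ≥0∞} (h1 : a ≠ ⊤) (h2 : b ≠ ⊤) : a + b ≠ ⊤ :=
  ENNReal.add_ne_top.mpr ⟨h1, h2⟩

section AuxESetDist

variable {Z : Type*} [PseudoEMetricSpace Z]

theorem eSetDist_le_edist {s t : Set Z} {p q : Z} (hp : p ∈ s) (hq : q ∈ t) :
    eSetDist s t ≤ edist p q :=
  le_trans (iInf₂_le p hp) (EMetric.infEdist_le_edist_of_mem hq)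

theorem exists_edist_le_of_eSetDist_le {s t : Set Z} {B : ℝ≥0∞}
    (h : eSetDist s t ≤ B) (hB : B ≠ ⊤) : ∃ p ∈ s, ∃ q ∈ t, edist p q ≤ B + 1 := by
  have h' : eSetDist s t < B + 1 := lt_of_le_of_lt h (ENNReal.lt_add_right hB one_ne_zero)
  rw [eSetDist, iInf_lt_iff] at h'
  obtain ⟨p, hp⟩ := h'
  rw [iInf_lt_iff] at hp
  obtain ⟨hps, hp⟩ := hp
  have hp := EMetric.infEdist_lt_iff.mp hp
  obtain ⟨q, hq, hpq⟩ := hp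
  exact ⟨p, hps, q, hq, hpq.le⟩

theorem eSetDist_comm (s t : Set Z) : eSetDist s t = eSetDist t s := by
  have key : ∀ s t : Set Z, eSetDist s t ≤ eSetDist t s := by
    intro s t
    refine le_iInf₂ fun q hq => ?_
    have h : EMetric.infEdist q s = ⨅ p ∈ s, edist q p := rfl
    rw [h]
    refine le_iInf₂ fun p hp => ?_
    rw [edist_comm]
    exact eSetDist_le_edist hp hq
  exact le_antisymm (key s t) (key t s)

theorem eSetDist_triangle_through {s t u : Set Z} {B1 B2 ξ : ℝ≥0∞}
    (h1 : eSetDist s t ≤ B1) (h2 : eSetDist t u ≤ B2) (hd : EMetric.diam t ≤ ξ)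
    (hB1 : B1 ≠ ⊤) (hB2 : B2 ≠ ⊤) : eSetDist s u ≤ B1 + B2 + ξ + 2 := by
  obtain ⟨p, hp, q, hq, hpq⟩ := exists_edist_le_of_eSetDist_le h1 hB1
  obtain ⟨q', hq', r, hr, hqr⟩ := exists_edist_le_of_eSetDist_le h2 hB2
  have hqq' : edist q q' ≤ ξ := le_trans (EMetric.edist_le_diam_of_mem hq hq') hd
  calc eSetDist s u ≤ edist p r := eSetDist_le_edist hp hr
    _ ≤ edist p q + edist q q' + edist q' r := edist_triangle4 _ _ _ _
    _ ≤ (B1 + 1) + ξ + (B2 + 1) := by gcongr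
    _ = B1 + B2 + ξ + 2 := by ring

end AuxESetDist

namespace HHSAction

variable {G : Type*} [Group G] {H : HHS X C}

theorem transv_symm {U V : S} (h : H.Transv U V) : H.Transv V U :=
  ⟨fun ho => h.1 (H.orth_symm ho), h.2.2, h.2.1⟩

theorem transv_sigma_iff (A : HHSAction G H) (k : G) (U V : S) :
    H.Transv (A.σ k U) (A.σ k V) ↔ H.Transv U V := by
  unfold HHS.Transv
  rw [A.orth_iff, A.nest_iff, A.nest_iff]

theorem sigma_fix_inv (A : HHSAction G H) {k : G} {U : S} (h : A.σ k U = U) :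
    A.σ k⁻¹ U = U := by
  conv_lhs => rw [← h]
  exact A.σ_inv_σ k U

/-- Uniform coarseness of the action maps `ρX k`, via the uniqueness axiom. -/
theorem uniform_coarse (A : HHSAction G H) {D : ℝ≥0∞} (hD : D ≠ ⊤) :
    ∃ D', D' ≠ ⊤ ∧ ∀ (k : G) (x y : X), edist x y ≤ D →
      edist (A.ρX k x) (A.ρX k y) ≤ D' := by
  have hκ : H.Kc * D + H.Kc + 2 * A.Ka + 3 ≠ ⊤ := by
    simp [ENNReal.add_ne_top, ENNReal.mul_ne_top, H.Kc_ne_top, hD, A.Ka_ne_top]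
  obtain ⟨θ, hθ, huniq⟩ := H.uniqueness _ hκ
  refine ⟨θ, hθ, fun k x y hxy => ?_⟩
  by_contra hcon
  obtain ⟨V, hV⟩ := huniq _ _ (le_of_lt (lt_of_not_ge hcon))
  have hσ : A.σ k (A.σ k⁻¹ V) = V := A.σ_σ_inv k V
  obtain ⟨p, hp⟩ := H.π_nonempty (A.σ k⁻¹ V) x
  obtain ⟨q, hq⟩ := H.π_nonempty (A.σ k⁻¹ V) y
  have h1 : EMetric.infEdist (A.iso k _ p) (H.π (A.σ k (A.σ k⁻¹ V)) (A.ρX k x)) ≤ A.Ka :=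
    A.proj_compat k (A.σ k⁻¹ V) x p hp
  have h2 : EMetric.infEdist (A.iso k _ q) (H.π (A.σ k (A.σ k⁻¹ V)) (A.ρX k y)) ≤ A.Ka :=
    A.proj_compat k (A.σ k⁻¹ V) y q hq
  obtain ⟨p', hp', hpp'⟩ := EMetric.infEdist_lt_iff.mp
    (lt_of_le_of_lt h1 (ENNReal.lt_add_right A.Ka_ne_top one_ne_zero))
  obtain ⟨q', hq', hqq'⟩ := EMetric.infEdist_lt_iff.mp
    (lt_of_le_of_lt h2 (ENNReal.lt_add_right A.Ka_ne_top one_ne_zero))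
  have hbound : eSetDist (H.π (A.σ k (A.σ k⁻¹ V)) (A.ρX k x)) (H.π (A.σ k (A.σ k⁻¹ V)) (A.ρX k y))
      ≤ (A.Ka + 1) + (H.Kc * D + H.Kc) + (A.Ka + 1) := by
    refine le_trans (eSetDist_le_edist hp' hq') ?_
    calc edist p' q'
        ≤ edist p' (A.iso k _ p) + edist (A.iso k _ p) (A.iso k _ q)
            + edist (A.iso k _ q) q' := edist_triangle4 _ _ _ _
      _ ≤ (A.Ka + 1) + (H.Kc * D + H.Kc) + (A.Ka + 1) := by
          refine add_le_add (add_le_add ?_ ?_) ?_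
          · rw [edist_comm]; exact hpp'.le
          · rw [(A.iso_isometry k _).edist_eq]
            calc edist p q ≤ H.Kc * edist x y + H.Kc := H.π_lipschitz _ x y p hp q hq
              _ ≤ H.Kc * D + H.Kc := by gcongr
          · exact hqq'.le
  rw [hσ] at hbound
  have hle : H.Kc * D + H.Kc + 2 * A.Ka + 3
      ≤ H.Kc * D + H.Kc + 2 * A.Ka + 2 := by
    refine le_trans (le_trans hV hbound) (le_of_eq ?_)
    ring
  have hfin : H.Kc * D + H.Kc + 2 * A.Ka ≠ ⊤ := by
    simp [ENNReal.add_ne_top, ENNReal.mul_ne_top, H.Kc_ne_top, hD, A.Ka_ne_top]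
  exact absurd hle (not_le_of_gt (ENNReal.add_lt_add_left hfin (by norm_num)))

/-- If the orbit projections to `C U` stay at uniformly bounded distance from the
projection of the basepoint, then `U` is not a big domain. -/
theorem notBig_of_bounded (A : HHSAction G H) (g : G) (x₀ : X) (U : S) {B : ℝ≥0∞}
    (hB : B ≠ ⊤)
    (h : ∀ m : ℤ, eSetDist (H.π U x₀) (H.π U (A.ρX (g ^ m) x₀)) ≤ B) :
    U ∉ A.bigSet g x₀ := by
  intro hU
  simp only [HHSAction.bigSet, Set.mem_setOf_eq] at hU
  apply hU
  obtain ⟨p₀, hp₀⟩ := H.π_nonempty U x₀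
  have hE : H.ξc + (B + 1) + H.ξc ≠ ⊤ := by
    simp [ENNReal.add_ne_top, H.ξc_ne_top, hB]
  apply (Metric.isBounded_closedBall (x := p₀) (r := (H.ξc + (B + 1) + H.ξc).toReal)).subset
  intro q hq
  simp only [HHSAction.projOrbit, Set.mem_iUnion] at hq
  obtain ⟨m, hqm⟩ := hq
  obtain ⟨p, hp, r, hr, hpr⟩ := exists_edist_le_of_eSetDist_le (h m) hB
  have h1 : edist p₀ p ≤ H.ξc :=
    le_trans (EMetric.edist_le_diam_of_mem hp₀ hp) (H.π_bounded U x₀)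
  have h3 : edist r q ≤ H.ξc :=
    le_trans (EMetric.edist_le_diam_of_mem hr hqm) (H.π_bounded U _)
  have hqp₀ : edist q p₀ ≤ H.ξc + (B + 1) + H.ξc := by
    rw [edist_comm]
    calc edist p₀ q ≤ edist p₀ p + edist p r + edist r q := edist_triangle4 _ _ _ _
      _ ≤ H.ξc + (B + 1) + H.ξc := by gcongr
  rw [Metric.mem_closedBall, dist_edist]
  exact ENNReal.toReal_mono hE hqp₀

theorem exists_far (A : HHSAction G H) {g : G} {x₀ : X} {U : S} (hU : U ∈ A.bigSet g x₀)
    {B : ℝ≥0∞} (hB : B ≠ ⊤) :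
    ∃ m : ℤ, ¬ eSetDist (H.π U x₀) (H.π U (A.ρX (g ^ m) x₀)) ≤ B := by
  by_contra hc
  push_neg at hc
  exact A.notBig_of_bounded g x₀ U hB hc hU

/-- Transport of the distance to a relative projection set under the action. -/
theorem transportRho (A : HHSAction G H) (k : G) (V W : S)
    (hrel : (H.nest V W ∧ V ≠ W) ∨ H.Transv V W) (x : X) {B : ℝ≥0∞} (hB : B ≠ ⊤)
    (h : eSetDist (H.π W x) (H.ρSet V W) ≤ B) :
    eSetDist (H.π (A.σ k W) (A.ρX k x)) (H.ρSet (A.σ k V) (A.σ k W))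
      ≤ B + 2 * A.Ka + 3 := by
  obtain ⟨p, hp, z, hz, hpz⟩ := exists_edist_le_of_eSetDist_le h hB
  have h1 := A.proj_compat k W x p hp
  have h2 := A.rho_compat k V W hrel z hz
  obtain ⟨p', hp', hpp'⟩ := EMetric.infEdist_lt_iff.mp
    (lt_of_le_of_lt h1 (ENNReal.lt_add_right A.Ka_ne_top one_ne_zero))
  obtain ⟨z', hz', hzz'⟩ := EMetric.infEdist_lt_iff.mp
    (lt_of_le_of_lt h2 (ENNReal.lt_add_right A.Ka_ne_top one_ne_zero))
  refine le_trans (eSetDist_le_edist hp' hz') ?_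
  calc edist p' z'
      ≤ edist p' (A.iso k W p) + edist (A.iso k W p) (A.iso k W z)
          + edist (A.iso k W z) z' := edist_triangle4 _ _ _ _
    _ ≤ (A.Ka + 1) + (B + 1) + (A.Ka + 1) := by
        refine add_le_add (add_le_add ?_ ?_) ?_
        · rw [edist_comm]; exact hpp'.le
        · rw [(A.iso_isometry k W).edist_eq]; exact hpz
        · exact hzz'.le
    _ = B + 2 * A.Ka + 3 := by ring

end HHSAction
section AuxChain

open Classical in
/-- The chain of containers associated with a pairwise-orthogonal family. -/
private noncomputable def contChain (H : HHS X C) (f : ℕ → S) : ℕ → S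
  | 0 => H.maxD
  | (i+1) =>
      if h : ∃ W, H.nest W (contChain H f i) ∧ W ≠ contChain H f i ∧
          ∀ V, H.nest V (contChain H f i) → H.orth V (f i) → H.nest V W
      then h.choose else contChain H f i

private theorem contChain_nest_succ (H : HHS X C) (f : ℕ → S) (i : ℕ) :
    H.nest (contChain H f (i + 1)) (contChain H f i) := by
  rw [contChain]
  split
  · rename_i h
    exact h.choose_spec.1
  · exact H.nest_refl _

private theorem contChain_mono (H : HHS X C) (f : ℕ → S) {i j : ℕ} (h : i ≤ j) :
    H.nest (contChain H f j) (contChain H f i) := by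
  induction j, h using Nat.le_induction with
  | base => exact H.nest_refl _
  | succ j hij ih => exact H.nest_trans (contChain_nest_succ H f j) ih

private theorem contChain_inv (H : HHS X C) (f : ℕ → S) {n : ℕ}
    (hf : ∀ i j, i < j → j < n → H.orth (f i) (f j)) :
    ∀ i j, i ≤ j → j < n → H.nest (f j) (contChain H f i) := by
  intro i
  induction i with
  | zero => intro j _ _; exact H.nest_maxD _
  | succ i ih =>
    intro j hij hjn
    have hin : i < n := lt_of_lt_of_le (Nat.lt_succ_self i) (le_trans hij (le_of_lt hjn))
    have hi1n : i + 1 < n := lt_of_le_of_lt hij hjn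
    have hex : ∃ W, H.nest W (contChain H f i) ∧ W ≠ contChain H f i ∧
        ∀ V, H.nest V (contChain H f i) → H.orth V (f i) → H.nest V W := by
      apply H.container (contChain H f i) (f i) (ih i le_rfl hin)
      exact ⟨f (i + 1), ih (i + 1) (Nat.le_succ i) hi1n,
        H.orth_symm (hf i (i + 1) (Nat.lt_succ_self i) hi1n)⟩
    have hstep : contChain H f (i + 1) = hex.choose := by rw [contChain, dif_pos hex]
    rw [hstep]
    exact hex.choose_spec.2.2 (f j) (ih j (le_trans (Nat.le_succ i) hij) hjn)
      (H.orth_symm (hf i j (lt_of_lt_of_le (Nat.lt_succ_self i) hij) hjn))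

private theorem contChain_ne (H : HHS X C) (f : ℕ → S) {n : ℕ}
    (hf : ∀ i j, i < j → j < n → H.orth (f i) (f j)) :
    ∀ i, i + 1 < n → contChain H f (i + 1) ≠ contChain H f i := by
  intro i hi1n
  have hin : i < n := Nat.lt_of_succ_lt hi1n
  have hex : ∃ W, H.nest W (contChain H f i) ∧ W ≠ contChain H f i ∧
      ∀ V, H.nest V (contChain H f i) → H.orth V (f i) → H.nest V W := by
    apply H.container (contChain H f i) (f i) (contChain_inv H f hf i i le_rfl hin)
    exact ⟨f (i + 1), contChain_inv H f hf i (i + 1) (Nat.le_succ i) hi1n,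
      H.orth_symm (hf i (i + 1) (Nat.lt_succ_self i) hi1n)⟩
  have hstep : contChain H f (i + 1) = hex.choose := by rw [contChain, dif_pos hex]
  rw [hstep]
  exact hex.choose_spec.2.1

/-- A pairwise-orthogonal family of domains has size at most the complexity. -/
theorem orth_family_le_complexity (H : HHS X C) (n : ℕ) (f : ℕ → S)
    (hf : ∀ i j, i < j → j < n → H.orth (f i) (f j)) : n ≤ H.complexity := by
  classical
  have hinj : Set.InjOn (contChain H f) ↑(Finset.range n) := by
    intro i hi j hj hij
    simp only [Finset.coe_range, Set.mem_Iio] at hi hj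
    by_contra hne
    have key : ∀ i j : ℕ, i < j → j < n → contChain H f i ≠ contChain H f j := by
      intro i j hlt hjn heq
      have h1 : H.nest (contChain H f (i + 1)) (contChain H f i) := contChain_nest_succ H f i
      have h2 : H.nest (contChain H f i) (contChain H f (i + 1)) := by
        rw [heq]
        exact contChain_mono H f hlt
      exact contChain_ne H f hf i (lt_of_le_of_lt hlt hjn) (H.nest_antisymm h1 h2)
    rcases Nat.lt_or_ge i j with h | h
    · exact key i j h hj hij
    · rcases Nat.lt_or_ge j i with h' | h'
      · exact key j i h' hi hij.symm
      · exact hne (le_antisymm h' h)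
  have hpair : ∀ U ∈ (Finset.range n).image (contChain H f),
      ∀ V ∈ (Finset.range n).image (contChain H f), H.nest U V ∨ H.nest V U := by
    intro a ha b hb
    simp only [Finset.mem_image, Finset.mem_range] at ha hb
    obtain ⟨i, _, rfl⟩ := ha
    obtain ⟨j, _, rfl⟩ := hb
    rcases le_total i j with h | h
    · exact Or.inr (contChain_mono H f h)
    · exact Or.inl (contChain_mono H f h)
  have hcard := H.finite_complexity ((Finset.range n).image (contChain H f)) hpair
  rwa [Finset.card_image_of_injOn hinj, Finset.card_range] at hcard

end AuxChain

namespace HHSAction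

variable {G : Type*} [Group G] {H : HHS X C}

/-- Nesting between a domain and a translate is impossible (complexity bound). -/
theorem not_nest_translate (A : HHSAction G H) (k : G) (U : S)
    (h1 : H.nest U (A.σ k U)) (h2 : U ≠ A.σ k U) : False := by
  classical
  have hstep : ∀ i : ℕ, H.nest (A.σ (k ^ i) U) (A.σ (k ^ (i + 1)) U) := by
    intro i
    have e : A.σ (k ^ (i + 1)) U = A.σ (k ^ i) (A.σ k U) := by
      rw [pow_succ, A.σ_mul]
    rw [e]
    exact (A.nest_iff (k ^ i) U (A.σ k U)).mpr h1
  have hmono : ∀ i j : ℕ, i ≤ j → H.nest (A.σ (k ^ i) U) (A.σ (k ^ j) U) := by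
    intro i j h
    induction j, h using Nat.le_induction with
    | base => exact H.nest_refl _
    | succ j hij ih => exact H.nest_trans ih (hstep j)
  have hne : ∀ i : ℕ, A.σ (k ^ i) U ≠ A.σ (k ^ (i + 1)) U := by
    intro i heq
    have e : A.σ (k ^ (i + 1)) U = A.σ (k ^ i) (A.σ k U) := by
      rw [pow_succ, A.σ_mul]
    rw [e] at heq
    exact h2 (A.σ_injective (k ^ i) heq)
  have hinj : Set.InjOn (fun i : ℕ => A.σ (k ^ i) U) ↑(Finset.range (H.complexity + 1)) := by
    intro i _ j _ hij
    by_contra hneij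
    have key : ∀ i j : ℕ, i < j → A.σ (k ^ i) U ≠ A.σ (k ^ j) U := by
      intro i j hlt heq
      apply hne i
      refine H.nest_antisymm (hstep i) ?_
      have := hmono (i + 1) j hlt
      rwa [← heq] at this
    rcases Nat.lt_or_ge i j with h | h
    · exact key i j h hij
    · rcases Nat.lt_or_ge j i with h' | h'
      · exact key j i h' hij.symm
      · exact hneij (le_antisymm h' h)
  have hpair : ∀ a ∈ (Finset.range (H.complexity + 1)).image (fun i : ℕ => A.σ (k ^ i) U),
      ∀ b ∈ (Finset.range (H.complexity + 1)).image (fun i : ℕ => A.σ (k ^ i) U),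
      H.nest a b ∨ H.nest b a := by
    intro a ha b hb
    simp only [Finset.mem_image, Finset.mem_range] at ha hb
    obtain ⟨i, _, rfl⟩ := ha
    obtain ⟨j, _, rfl⟩ := hb
    rcases le_total i j with h | h
    · exact Or.inl (hmono i j h)
    · exact Or.inr (hmono j i h)
  have hcard := H.finite_complexity _ hpair
  rw [Finset.card_image_of_injOn hinj, Finset.card_range] at hcard
  omega

end HHSAction
namespace HHSAction

variable {G : Type*} [Group G] {H : HHS X C}

/-- A big domain is never transverse to any of its translates. -/
theorem not_transv_translate (A : HHSAction G H) {g : G} {x₀ : X} {U : S}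
    (hU : U ∈ A.bigSet g x₀) (c : ℤ) (hT : H.Transv U (A.σ (g ^ c) U)) : False := by
  obtain ⟨hT1, hT2, hT3⟩ := hT
  have e_inv : A.σ (g ^ (-c)) (A.σ (g ^ c) U) = U := by
    rw [← A.σ_mul, ← zpow_add, neg_add_cancel, zpow_zero, A.σ_one]
  have hT' : H.Transv (A.σ (g ^ (-c)) U) U := by
    have h := (A.transv_sigma_iff (g ^ (-c)) U (A.σ (g ^ c) U)).mpr ⟨hT1, hT2, hT3⟩
    rwa [e_inv] at h
  have hTsymm : H.Transv (A.σ (g ^ c) U) U := transv_symm ⟨hT1, hT2, hT3⟩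
  obtain ⟨zp, hzp⟩ : (H.ρSet (A.σ (g ^ c) U) U).Nonempty :=
    H.ρSet_nonempty _ _ (Or.inr ⟨hTsymm.1, hTsymm.2.1, hTsymm.2.2⟩)
  obtain ⟨zm, hzm⟩ : (H.ρSet (A.σ (g ^ (-c)) U) U).Nonempty :=
    H.ρSet_nonempty _ _ (Or.inr ⟨hT'.1, hT'.2.1, hT'.2.2⟩)
  obtain ⟨p₀, hp₀⟩ := H.π_nonempty U x₀
  -- uniform step bound along the orbit
  obtain ⟨D', hD', hcoarse⟩ :=
    A.uniform_coarse (D := edist x₀ (A.ρX (g ^ c) x₀)) (edist_ne_top _ _)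
  have hstep : ∀ m : ℤ, edist (A.ρX (g ^ m) x₀) (A.ρX (g ^ (m + c)) x₀) ≤ D' := by
    intro m
    have h1 : A.ρX (g ^ m) (A.ρX (g ^ c) x₀) = A.ρX (g ^ (m + c)) x₀ := by
      rw [← A.ρX_mul, ← zpow_add]
    have h2 := hcoarse (g ^ m) x₀ (A.ρX (g ^ c) x₀) le_rfl
    rwa [h1] at h2
  have hΛ : ∀ m : ℤ, eSetDist (H.π U (A.ρX (g ^ m) x₀)) (H.π U (A.ρX (g ^ (m + c)) x₀))
      ≤ H.Kc * D' + H.Kc := by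
    intro m
    obtain ⟨p, hp⟩ := H.π_nonempty U (A.ρX (g ^ m) x₀)
    obtain ⟨q, hq⟩ := H.π_nonempty U (A.ρX (g ^ (m + c)) x₀)
    refine le_trans (eSetDist_le_edist hp hq) ?_
    refine le_trans (H.π_lipschitz U _ _ p hp q hq) ?_
    exact add_le_add_left (mul_le_mul_right (hstep m) H.Kc) H.Kc
  have hΛne : H.Kc * D' + H.Kc ≠ ⊤ := by
    simp [ENNReal.add_ne_top, ENNReal.mul_ne_top, H.Kc_ne_top, hD']
  have hθne : ∀ m : ℤ, eSetDist (H.π U x₀) (H.π U (A.ρX (g ^ m) x₀)) ≠ ⊤ := by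
    intro m
    obtain ⟨q, hq⟩ := H.π_nonempty U (A.ρX (g ^ m) x₀)
    exact ne_top_of_le_ne_top (edist_ne_top p₀ q) (eSetDist_le_edist hp₀ hq)
  have hCp : eSetDist (H.π U x₀) (H.ρSet (A.σ (g ^ c) U) U) ≠ ⊤ :=
    ne_top_of_le_ne_top (edist_ne_top p₀ zp) (eSetDist_le_edist hp₀ hzp)
  have hCm : eSetDist (H.π U x₀) (H.ρSet (A.σ (g ^ (-c)) U) U) ≠ ⊤ :=
    ne_top_of_le_ne_top (edist_ne_top p₀ zm) (eSetDist_le_edist hp₀ hzm)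
  have hκ3 : H.κ₀ + 2 * A.Ka + 3 ≠ ⊤ := by
    simp [ENNReal.add_ne_top, H.κ₀_ne_top, A.Ka_ne_top, ENNReal.mul_ne_top]
  -- the key alternative coming from consistency and equivariance
  obtain ⟨K, hKne, hstar⟩ : ∃ K : ℝ≥0∞, K ≠ ⊤ ∧ ∀ m : ℤ,
      eSetDist (H.π U x₀) (H.π U (A.ρX (g ^ m) x₀)) ≤ K ∨
      eSetDist (H.π U x₀) (H.π U (A.ρX (g ^ (m + c)) x₀)) ≤ K := by
    refine ⟨max (eSetDist (H.π U x₀) (H.ρSet (A.σ (g ^ (-c)) U) U)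
        + (H.κ₀ + 2 * A.Ka + 3) + H.ξc + 2)
        (eSetDist (H.π U x₀) (H.ρSet (A.σ (g ^ c) U) U) + H.κ₀ + H.ξc + 2), ?_, ?_⟩
    · have h1 : eSetDist (H.π U x₀) (H.ρSet (A.σ (g ^ (-c)) U) U)
          + (H.κ₀ + 2 * A.Ka + 3) + H.ξc + 2 ≠ ⊤ := by
        exact addNeTop (addNeTop (addNeTop hCm hκ3) H.ξc_ne_top) (by norm_num)
      have h2 : eSetDist (H.π U x₀) (H.ρSet (A.σ (g ^ c) U) U) + H.κ₀ + H.ξc + 2 ≠ ⊤ := by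
        exact addNeTop (addNeTop (addNeTop hCp H.κ₀_ne_top) H.ξc_ne_top) (by norm_num)
      exact (max_lt (lt_top_iff_ne_top.mpr h1) (lt_top_iff_ne_top.mpr h2)).ne
    · intro m
      rcases H.consistency_transv U (A.σ (g ^ c) U) ⟨hT1, hT2, hT3⟩
        (A.ρX (g ^ (m + c)) x₀) with hcase | hcase
      · left
        have htr := A.transportRho (g ^ (-c)) U (A.σ (g ^ c) U) (Or.inr ⟨hT1, hT2, hT3⟩)
          (A.ρX (g ^ (m + c)) x₀) H.κ₀_ne_top hcase
        rw [e_inv] at htr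
        have hxx : A.ρX (g ^ (-c)) (A.ρX (g ^ (m + c)) x₀) = A.ρX (g ^ m) x₀ := by
          rw [← A.ρX_mul, ← zpow_add, show -c + (m + c) = m from by ring]
        rw [hxx] at htr
        refine le_trans (eSetDist_triangle_through (le_refl _) ?_ (H.ρSet_bounded _ U)
          hCm hκ3) (le_max_left _ _)
        rw [eSetDist_comm]; exact htr
      · right
        refine le_trans (eSetDist_triangle_through (le_refl _) ?_ (H.ρSet_bounded _ U)
          hCp H.κ₀_ne_top) (le_max_right _ _)
        rw [eSetDist_comm]; exact hcase
  -- Lipschitz estimate in the step `c`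
  have hLip : ∀ m : ℤ, eSetDist (H.π U x₀) (H.π U (A.ρX (g ^ m) x₀))
      ≤ eSetDist (H.π U x₀) (H.π U (A.ρX (g ^ (m + c)) x₀))
        + (H.Kc * D' + H.Kc) + H.ξc + 2 := by
    intro m
    refine eSetDist_triangle_through (le_refl _) ?_ (H.π_bounded U _) (hθne (m + c)) hΛne
    rw [eSetDist_comm]; exact hΛ m
  -- contradiction with unboundedness
  have hBne : K + (H.Kc * D' + H.Kc) + H.ξc + 2 ≠ ⊤ := by
    simp [ENNReal.add_ne_top, hKne, hΛne, H.ξc_ne_top]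
  obtain ⟨m, hm⟩ := A.exists_far hU hBne
  rcases hstar m with h | h
  · exact hm (le_trans h (le_add_right (le_add_right (le_add_right le_rfl))))
  · refine hm (le_trans (hLip m) ?_)
    exact add_le_add_left (add_le_add_left (add_le_add_left h _) _) _

/-- Every big domain is fixed by `g^d` for some `1 ≤ d ≤ complexity`. -/
theorem exists_period (A : HHSAction G H) {g : G} {x₀ : X} {U : S}
    (hU : U ∈ A.bigSet g x₀) :
    ∃ d : ℕ, 0 < d ∧ d ≤ H.complexity ∧ A.σ (g ^ d) U = U := by
  classical
  by_cases hrep : ∃ i j, i < j ∧ j ≤ H.complexity ∧ A.σ (g ^ i) U = A.σ (g ^ j) U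
  · obtain ⟨i, j, hij, hjn, heq⟩ := hrep
    refine ⟨j - i, by omega, by omega, ?_⟩
    have h : A.σ (g ^ i) (A.σ (g ^ (j - i)) U) = A.σ (g ^ i) U := by
      rw [← A.σ_mul, ← pow_add, show i + (j - i) = j from by omega]
      exact heq.symm
    exact A.σ_injective (g ^ i) h
  · exfalso
    push_neg at hrep
    have horthc : ∀ c : ℕ, 0 < c → c ≤ H.complexity → H.orth U (A.σ (g ^ c) U) := by
      intro c hc0 hcn
      have hneU : U ≠ A.σ (g ^ c) U := by
        have h := hrep 0 c hc0 hcn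
        simpa [A.σ_one] using h
      by_contra horth
      by_cases hnest1 : H.nest U (A.σ (g ^ c) U)
      · exact A.not_nest_translate (g ^ c) U hnest1 hneU
      by_cases hnest2 : H.nest (A.σ (g ^ c) U) U
      · have e : A.σ ((g ^ c)⁻¹) (A.σ (g ^ c) U) = U := A.σ_inv_σ _ _
        have h1 : H.nest U (A.σ ((g ^ c)⁻¹) U) := by
          have h := (A.nest_iff ((g ^ c)⁻¹) (A.σ (g ^ c) U) U).mpr hnest2
          rwa [e] at h
        have h2 : U ≠ A.σ ((g ^ c)⁻¹) U := by
          intro he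
          apply hneU
          have h3 : A.σ (g ^ c) U = U := by
            conv_lhs => rw [he]
            exact A.σ_σ_inv (g ^ c) U
          exact h3.symm
        exact A.not_nest_translate ((g ^ c)⁻¹) U h1 h2
      · have hz : (g : G) ^ (c : ℤ) = g ^ c := zpow_natCast g c
        refine A.not_transv_translate hU (c : ℤ) ?_
        rw [hz]
        exact ⟨horth, hnest1, hnest2⟩
    -- the first complexity+1 translates are pairwise orthogonal and distinct
    have hconc := orth_family_le_complexity H (H.complexity + 1)
      (fun i => A.σ (g ^ i) U) ?_
    · omega
    · intro i j hij hjn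
      have hc : H.orth U (A.σ (g ^ (j - i)) U) := horthc (j - i) (by omega) (by omega)
      have h := (A.orth_iff (g ^ i) U (A.σ (g ^ (j - i)) U)).mpr hc
      rwa [← A.σ_mul, ← pow_add, show i + (j - i) = j from by omega] at h

/-- If `g^M` fixes `U` and `V` and `ρ^U_V` is defined, then `V` is not big. -/
theorem big_bounded_of_rel (A : HHSAction G H) {g : G} (x₀ : X) {U V : S} {M : ℕ}
    (hM : 0 < M) (hfixU : A.σ (g ^ M) U = U) (hfixV : A.σ (g ^ M) V = V)
    (hrel : (H.nest U V ∧ U ≠ V) ∨ H.Transv U V) :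
    V ∉ A.bigSet g x₀ := by
  classical
  have hfix : ∀ W : S, A.σ (g ^ M) W = W → ∀ n : ℤ, A.σ (g ^ ((M : ℤ) * n)) W = W := by
    intro W hW
    have hWz : A.σ (g ^ ((M : ℕ) : ℤ)) W = W := by rwa [zpow_natCast]
    have hWzinv : A.σ (g ^ (-((M : ℕ) : ℤ))) W = W := by
      rw [zpow_neg]
      exact A.sigma_fix_inv hWz
    intro n
    induction n using Int.induction_on with
    | zero => simp [A.σ_one]
    | succ n ih =>
      rw [show (M : ℤ) * (n + 1) = (M : ℤ) * n + (M : ℤ) from by ring, zpow_add, A.σ_mul,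
        hWz]
      exact ih
    | pred n ih =>
      rw [show (M : ℤ) * (-n - 1) = (M : ℤ) * (-n) + (-(M : ℤ)) from by ring, zpow_add,
        A.σ_mul, hWzinv]
      exact ih
  obtain ⟨z₀, hz₀⟩ : (H.ρSet U V).Nonempty := by
    refine H.ρSet_nonempty U V ?_
    rcases hrel with ⟨h1, h2⟩ | h
    · exact Or.inl ⟨h1, h2⟩
    · exact Or.inr ⟨h.1, h.2.1, h.2.2⟩
  have hbne : ∀ j : ℤ, eSetDist (H.π V (A.ρX (g ^ j) x₀)) (H.ρSet U V) ≠ ⊤ := by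
    intro j
    obtain ⟨p, hp⟩ := H.π_nonempty V (A.ρX (g ^ j) x₀)
    exact ne_top_of_le_ne_top (edist_ne_top p z₀) (eSetDist_le_edist hp hz₀)
  obtain ⟨B₀, hB₀ne, hB₀⟩ : ∃ B₀ : ℝ≥0∞, B₀ ≠ ⊤ ∧ ∀ j : ℕ, j < M →
      eSetDist (H.π V (A.ρX (g ^ (j : ℤ)) x₀)) (H.ρSet U V) ≤ B₀ := by
    refine ⟨(Finset.range M).sup
      (fun j : ℕ => eSetDist (H.π V (A.ρX (g ^ (j : ℤ)) x₀)) (H.ρSet U V)), ?_, ?_⟩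
    · rw [← lt_top_iff_ne_top, Finset.sup_lt_iff (by simp)]
      exact fun j _ => lt_top_iff_ne_top.mpr (hbne (j : ℤ))
    · exact fun j hj => Finset.le_sup
        (f := fun j : ℕ => eSetDist (H.π V (A.ρX (g ^ (j : ℤ)) x₀)) (H.ρSet U V))
        (Finset.mem_range.mpr hj)
  have hb : ∀ m : ℤ, eSetDist (H.π V (A.ρX (g ^ m) x₀)) (H.ρSet U V)
      ≤ B₀ + 2 * A.Ka + 3 := by
    intro m
    have hj0 : 0 ≤ m % (M : ℤ) := Int.emod_nonneg m (by exact_mod_cast hM.ne')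
    have hjM : m % (M : ℤ) < (M : ℤ) := Int.emod_lt_of_pos m (by exact_mod_cast hM)
    have hbj : eSetDist (H.π V (A.ρX (g ^ (m % (M : ℤ))) x₀)) (H.ρSet U V) ≤ B₀ := by
      have h := hB₀ (m % (M : ℤ)).toNat (by omega)
      rwa [Int.toNat_of_nonneg hj0] at h
    have htr := A.transportRho (g ^ ((M : ℤ) * (m / (M : ℤ)))) U V hrel
      (A.ρX (g ^ (m % (M : ℤ))) x₀) hB₀ne hbj
    rw [hfix V hfixV (m / (M : ℤ)), hfix U hfixU (m / (M : ℤ)), ← A.ρX_mul, ← zpow_add,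
      Int.mul_ediv_add_emod m (M : ℤ)] at htr
    exact htr
  have hκ3 : B₀ + 2 * A.Ka + 3 ≠ ⊤ := by
    simp [ENNReal.add_ne_top, hB₀ne, A.Ka_ne_top, ENNReal.mul_ne_top]
  have hb0 : eSetDist (H.π V x₀) (H.ρSet U V) ≤ B₀ + 2 * A.Ka + 3 := by
    have h := hb 0
    rwa [zpow_zero, A.ρX_one] at h
  refine A.notBig_of_bounded g x₀ V
    (B := (B₀ + 2 * A.Ka + 3) + (B₀ + 2 * A.Ka + 3) + H.ξc + 2) ?_ ?_
  · simp [ENNReal.add_ne_top, hκ3, H.ξc_ne_top]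
  · intro m
    refine eSetDist_triangle_through hb0 ?_ (H.ρSet_bounded U V) hκ3 hκ3
    rw [eSetDist_comm]; exact hb m

end HHSAction
/-- There is `M`, depending only on the complexity of `𝔖`, such that `g^M · U = U`
for every automorphism `g` and every `U ∈ Big(g)`; moreover distinct elements of
`Big(g)` are orthogonal. -/
theorem bigSet_fixed_and_orthogonal : ∀ n₀ : ℕ, ∃ M : ℕ, 0 < M ∧
    ∀ (X : Type*) [MetricSpace X] (S : Type*) (C : S → Type*)
      [∀ U, MetricSpace (C U)] (H : HHS X C), H.complexity = n₀ →
    ∀ (G : Type*) [Group G] (A : HHSAction G H) (g : G) (x₀ : X) (U : S),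
      U ∈ A.bigSet g x₀ →
      A.σ (g ^ M) U = U ∧ ∀ V ∈ A.bigSet g x₀, V ≠ U → H.orth U V := by
  intro n₀
  refine ⟨n₀.factorial, n₀.factorial_pos, ?_⟩
  intro X _ S C _ H hcomp G _ A g x₀ U hU
  have key : ∀ W : S, W ∈ A.bigSet g x₀ → A.σ (g ^ n₀.factorial) W = W := by
    intro W hW
    obtain ⟨d, hd0, hdn, hfixd⟩ := A.exists_period hW
    have hdvd : d ∣ n₀.factorial := Nat.dvd_factorial hd0 (by omega)
    obtain ⟨e, he⟩ := hdvd
    have hiter : ∀ e : ℕ, A.σ (g ^ (d * e)) W = W := by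
      intro e
      induction e with
      | zero => simp [A.σ_one]
      | succ e ih => rw [Nat.mul_succ, pow_add, A.σ_mul, hfixd, ih]
    rw [he]
    exact hiter e
  refine ⟨key U hU, ?_⟩
  intro V hV hVU
  by_contra horth
  have hfixU := key U hU
  have hfixV := key V hV
  by_cases h1 : H.nest U V
  · exact A.big_bounded_of_rel x₀ n₀.factorial_pos hfixU hfixV
      (Or.inl ⟨h1, Ne.symm hVU⟩) hV
  by_cases h2 : H.nest V U
  · exact A.big_bounded_of_rel x₀ n₀.factorial_pos hfixV hfixU (Or.inl ⟨h2, hVU⟩) hU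
  · exact A.big_bounded_of_rel x₀ n₀.factorial_pos hfixU hfixV
      (Or.inr ⟨horth, h1, h2⟩) hV
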